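/- Let G be a finite simple graph and x a leaf of G (a vertex of degree one) with unique neighbor y. Then for every integer s ≥ 1, the colon ideal satisfies (I(G)^{(s)} : xy) = I(G)^{(s−1)} (where I(G)^{(0)} is understood to be the whole polynomial ring S). -/

import Mathlib

open MvPolynomial

/-! ### Symbolic powers -/

/-- The `s`-th symbolic power of an ideal `I`:
`I^{(s)} = ⋂_{p ∈ Min(I)} Ker(R → (R/I^s)_p)`. -/
noncomputable def symbolicPower {R : Type} [CommRing R] (I : Ideal R) (s : ℕ) : Ideal R :=
  ⨅ p : {p : Ideal R // p ∈ I.minimalPrimes},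
    haveI : p.1.IsPrime := p.2.1.1
    RingHom.ker ((algebraMap (R ⧸ I ^ s)
        (Localization (Submonoid.map (Ideal.Quotient.mk (I ^ s)) p.1.primeCompl))).comp
      (Ideal.Quotient.mk (I ^ s)))

/-! ### Edge ideals and graph notions -/

/-- The edge ideal of a graph on vertex set `Fin n`, inside `K[x_1, …, x_n]`. -/
noncomputable def edgeIdeal (K : Type) [Field K] {n : ℕ} (G : SimpleGraph (Fin n)) :
    Ideal (MvPolynomial (Fin n) K) :=
  Ideal.span {m | ∃ i j : Fin n, G.Adj i j ∧ m = X i * X j}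

/-- The edge sets of cycles of `G`. -/
def cycleEdgeSets {V : Type} (G : SimpleGraph V) : Set (Set (Sym2 V)) :=
  {E' | ∃ (v : V) (w : G.Walk v v), w.IsCycle ∧ E' = {e | e ∈ w.edges}}

/-- A graph is unicyclic if it contains exactly one cycle as a subgraph. -/
def IsUnicyclic {V : Type} (G : SimpleGraph V) : Prop :=
  ∃! E', E' ∈ cycleEdgeSets G

/-- The graph `G \ U`: delete the vertices of `U` and all edges meeting `U`. -/
def deleteVertices {V : Type} (G : SimpleGraph V) (U : Set V) : SimpleGraph V where
  Adj a b := G.Adj a b ∧ a ∉ U ∧ b ∉ U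
  symm := ⟨fun _ _ ⟨h, ha, hb⟩ => ⟨h.symm, hb, ha⟩⟩
  loopless := ⟨fun a ⟨h, _, _⟩ => G.loopless.irrefl a h⟩

/-- The distance `d_G(x, W)` from a vertex to a set of vertices. -/
noncomputable def distToSet {V : Type} (G : SimpleGraph V) (x : V) (W : Set V) : ℕ :=
  sInf (G.dist x '' W)

/-- `x` is a leaf of `G`, i.e. a vertex of degree one. -/
def IsLeaf {V : Type} (G : SimpleGraph V) (x : V) : Prop :=
  ∃ y, G.neighborSet x = {y}

/-- `M` is an induced matching of `G`: a set of pairwise disjoint edges such that no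
edge of `E(G) \ M` is contained in the union of two edges of `M`. -/
def IsInducedMatching {V : Type} (G : SimpleGraph V) (M : Set (Sym2 V)) : Prop :=
  M ⊆ G.edgeSet ∧
  (∀ e ∈ M, ∀ f ∈ M, e ≠ f → ∀ v : V, ¬(v ∈ e ∧ v ∈ f)) ∧
  (∀ g ∈ G.edgeSet, g ∉ M → ∀ e ∈ M, ∀ f ∈ M, ¬(∀ v : V, v ∈ g → v ∈ e ∨ v ∈ f))

/-- The induced matching number `ν(G)`. -/
noncomputable def inducedMatchingNumber {V : Type} (G : SimpleGraph V) : ℕ :=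
  sSup {k : ℕ | ∃ M : Set (Sym2 V), IsInducedMatching G M ∧ M.ncard = k}

/-- `A` is a vertex cover of `G`. -/
def IsVertexCover {V : Type} (G : SimpleGraph V) (A : Set V) : Prop :=
  ∀ ⦃u v : V⦄, G.Adj u v → u ∈ A ∨ v ∈ A

/-- `A` is a minimal vertex cover of `G`. -/
def IsMinimalVertexCover {V : Type} (G : SimpleGraph V) (A : Set V) : Prop :=
  IsVertexCover G A ∧ ∀ B ⊂ A, ¬ IsVertexCover G B

/-! ### Castelnuovo–Mumford regularity -/

/-- An element `f` of a twisted graded free module `⊕_{e : σ} S(-deg e)` over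
`S = K[x_1, …, x_n]` is homogeneous of degree `d` iff each component `f e` is a
homogeneous polynomial of degree `d - deg e`. -/
def IsHomogElem {K : Type} [Field K] {n : ℕ} {σ : Type} (deg : σ → ℕ)
    (f : σ →₀ MvPolynomial (Fin n) K) (d : ℕ) : Prop :=
  ∀ e : σ, if deg e ≤ d then f e ∈ homogeneousSubmodule (Fin n) K (d - deg e) else f e = 0

/-- A graded free resolution of an ideal `I ⊆ S = K[x_1, …, x_n]` by finitely generated
twisted graded free modules `F i = ⊕_{e : σ i} S(-deg i e)`, with degree-preserving
differentials, exact, and with augmentation onto `I`. -/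
structure GradedFreeResolution (K : Type) [Field K] (n : ℕ)
    (I : Ideal (MvPolynomial (Fin n) K)) where
  σ : ℕ → Type
  fin : ∀ i, Fintype (σ i)
  deg : ∀ i, σ i → ℕ
  aug : (σ 0 →₀ MvPolynomial (Fin n) K) →ₗ[MvPolynomial (Fin n) K] MvPolynomial (Fin n) K
  d : ∀ i, (σ (i + 1) →₀ MvPolynomial (Fin n) K) →ₗ[MvPolynomial (Fin n) K]
        (σ i →₀ MvPolynomial (Fin n) K)
  aug_range : LinearMap.range aug = I
  exact_zero : LinearMap.ker aug = LinearMap.range (d 0)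
  exact : ∀ i, LinearMap.ker (d i) = LinearMap.range (d (i + 1))
  aug_graded : ∀ (dd : ℕ) (f : σ 0 →₀ MvPolynomial (Fin n) K),
    IsHomogElem (deg 0) f dd → aug f ∈ homogeneousSubmodule (Fin n) K dd
  d_graded : ∀ (i : ℕ) (dd : ℕ) (f : σ (i + 1) →₀ MvPolynomial (Fin n) K),
    IsHomogElem (deg (i + 1)) f dd → IsHomogElem (deg i) (d i f) dd

/-- The Castelnuovo–Mumford regularity of a homogeneous ideal `I ⊆ K[x_1, …, x_n]`:
the least `r` such that `I` admits a graded free resolution whose `i`-th term is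
generated in degrees `≤ r + i`.  (For finitely generated graded modules this agrees
with the usual definition `max{j - i : β_{i,j} ≠ 0}` via the minimal free resolution.) -/
noncomputable def reg (K : Type) [Field K] (n : ℕ) (I : Ideal (MvPolynomial (Fin n) K)) : ℕ :=
  sInf {r : ℕ | ∃ F : GradedFreeResolution K n I, ∀ (i : ℕ) (e : F.σ i), F.deg i e ≤ r + i}

/-! Fix a minimal prime `p` of `I(G)`. The variables lying in `p` form a minimal vertex cover `A`,
and `I(G)^s ⊆ (x_a : a ∈ A)^s`, whose members are exactly the polynomials all of whose
monomials have at least `s` factors from `A`. Minimality puts exactly one of `x, y` in `A`, so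
`xy` contributes one such factor and `u r xy ∈ I(G)^s` forces `u r ∈ (x_a : a ∈ A)^(s-1)`.
Minimality also gives each `a ∈ A` a neighbour `j a ∉ A`; multiplying by
`(∏_{a ∈ A} x_{j a})^(s-1)`, which avoids `p`, turns every generator `x_a` into the edge
`x_a x_{j a}` and lands in `I(G)^(s-1)`. -/

lemma mem_symbolicPower_iff {R : Type} [CommRing R] (I : Ideal R) (s : ℕ) (r : R) :
    r ∈ symbolicPower I s ↔ ∀ p ∈ I.minimalPrimes, ∃ u ∉ p, u * r ∈ I ^ s := by
  simp only [symbolicPower, Submodule.mem_iInf, Subtype.forall]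
  refine forall₂_congr fun p hp => ?_
  have : p.IsPrime := hp.1.1
  rw [RingHom.mem_ker, RingHom.comp_apply, IsLocalization.map_eq_zero_iff
    (Submonoid.map (Ideal.Quotient.mk (I ^ s)) p.primeCompl)]
  constructor
  · rintro ⟨⟨_, u, hu, rfl⟩, h⟩
    exact ⟨u, hu, Ideal.Quotient.eq_zero_iff_mem.mp (by rwa [map_mul])⟩
  · rintro ⟨u, hu, h⟩
    exact ⟨⟨_, u, hu, rfl⟩, by rw [← map_mul]; exact Ideal.Quotient.eq_zero_iff_mem.mpr h⟩

namespace Ideal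

variable {R ι : Type*} [CommSemiring R]

theorem pow_mul_mem_pow_of_span_singleton_mul_le {c : R} {I J : Ideal R}
    (h : span {c} * J ≤ I) (t : ℕ) {f : R} (hf : f ∈ J ^ t) : c ^ t * f ∈ I ^ t := by
  refine pow_right_mono h t ?_
  rw [mul_pow, span_singleton_pow]
  exact mul_mem_mul (mem_span_singleton_self _) hf

theorem span_singleton_prod_mul_span_image_le {I : Ideal R} (s : Finset ι) (m g : ι → R)
    (hmg : ∀ a ∈ s, m a * g a ∈ I) : span {∏ a ∈ s, m a} * span (g '' s) ≤ I := by
  classical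
  rw [span_mul_span', Set.singleton_mul, Set.image_image, span_le, Set.image_subset_iff]
  intro a ha
  rw [Set.mem_preimage, ← Finset.mul_prod_erase s m ha, mul_right_comm]
  exact I.mul_mem_right _ (hmg a ha)

end Ideal

namespace MvPolynomial

variable {σ R : Type*}

section CommSemiring

variable [CommSemiring R]

noncomputable def weightGeIdeal (w : σ → ℕ) (t : ℕ) : Ideal (MvPolynomial σ R) :=
  restrictSupportIdeal R {d | t ≤ Finsupp.weight w d} fun d e hde (hd : t ≤ _) => by
    obtain ⟨c, rfl⟩ := le_iff_exists_add.mp hde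
    exact hd.trans (by simp only [map_add, le_add_iff_nonneg_right, zero_le])

theorem mem_weightGeIdeal {w : σ → ℕ} {t : ℕ} {f : MvPolynomial σ R} :
    f ∈ weightGeIdeal w t ↔ ∀ d ∈ f.support, t ≤ Finsupp.weight w d :=
  Iff.rfl

theorem weightGeIdeal_mul_le (w : σ → ℕ) (a b : ℕ) :
    weightGeIdeal (R := R) w a * weightGeIdeal w b ≤ weightGeIdeal w (a + b) := by
  classical
  refine Ideal.mul_le.mpr fun f hf g hg => mem_weightGeIdeal.mpr fun d hd => ?_
  obtain ⟨d₁, hd₁, d₂, hd₂, rfl⟩ := Finset.mem_add.mp (support_mul f g hd)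
  rw [map_add]
  exact add_le_add (mem_weightGeIdeal.mp hf d₁ hd₁) (mem_weightGeIdeal.mp hg d₂ hd₂)

theorem mem_weightGeIdeal_of_mul_monomial {w : σ → ℕ} {t : ℕ} {f : MvPolynomial σ R}
    {e : σ →₀ ℕ} (h : f * monomial e 1 ∈ weightGeIdeal w (t + Finsupp.weight w e)) :
    f ∈ weightGeIdeal w t :=
  mem_weightGeIdeal.mpr fun d hd => by
    have hde : d + e ∈ (f * monomial e 1).support := by
      rwa [mem_support_iff, coeff_mul_monomial, mul_one, ← mem_support_iff]
    simpa using mem_weightGeIdeal.mp h _ hde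

theorem X_mem_span_X_image_iff [Nontrivial R] {A : Set σ} {i : σ} :
    (X i : MvPolynomial σ R) ∈ Ideal.span (X '' A) ↔ i ∈ A := by
  simp [mem_ideal_span_X_image, support_X, Finsupp.single_apply_ne_zero]

theorem span_X_image_le_weightGeIdeal_one (A : Set σ) :
    Ideal.span (X '' A) ≤ weightGeIdeal (R := R) (A.indicator 1) 1 := fun f hf =>
  mem_weightGeIdeal.mpr fun d hd => by
    obtain ⟨i, hi, hdi⟩ := mem_ideal_span_X_image.mp hf d hd
    calc 1 ≤ d i := Nat.one_le_iff_ne_zero.mpr hdi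
      _ ≤ _ := Finsupp.le_weight _ (by simp [hi]) d

theorem monomial_mem_span_X_image_pow {A : Set σ} {t : ℕ} {d : σ →₀ ℕ}
    (h : t ≤ Finsupp.weight (A.indicator 1) d) (r : R) :
    monomial d r ∈ Ideal.span (X '' A) ^ t := by
  induction t generalizing d with
  | zero => simp
  | succ t ih =>
    have hpos : Finsupp.weight (A.indicator 1) d ≠ 0 := by omega
    rw [Finsupp.weight_apply, Finsupp.sum] at hpos
    obtain ⟨i, -, hi⟩ := Finset.exists_ne_zero_of_sum_ne_zero hpos
    obtain ⟨hdi, hiA⟩ := mul_ne_zero_iff.mp hi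
    have hiA := Set.mem_of_indicator_ne_zero hiA
    have hweight := Finsupp.weight_sub_single_add (w := A.indicator (1 : σ → ℕ)) hdi
    rw [← Finsupp.sub_add_single_one_cancel hdi, monomial_add_single, pow_one, pow_succ]
    refine Ideal.mul_mem_mul (ih ?_) (Ideal.subset_span ⟨i, hiA, rfl⟩)
    simp only [Set.indicator_of_mem hiA, Pi.one_apply] at hweight
    omega

theorem span_X_image_pow (A : Set σ) (t : ℕ) :
    Ideal.span (X '' A) ^ t = weightGeIdeal (R := R) (A.indicator 1) t := by
  refine le_antisymm ?_ fun f hf => ?_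
  · induction t with
    | zero => exact fun f _ => mem_weightGeIdeal.mpr fun _ _ => Nat.zero_le _
    | succ t ih =>
      rw [pow_succ]
      exact (Ideal.mul_mono ih (span_X_image_le_weightGeIdeal_one A)).trans
        (weightGeIdeal_mul_le _ t 1)
  · rw [← support_sum_monomial_coeff f]
    exact Ideal.sum_mem _ fun d hd =>
      monomial_mem_span_X_image_pow (mem_weightGeIdeal.mp hf d hd) _

end CommSemiring

section CommRing

variable [CommRing R]

theorem sub_aeval_indicator_compl_mem_span_X_image (A : Set σ) (f : MvPolynomial σ R) :
    f - aeval (Aᶜ.indicator X) f ∈ Ideal.span (X '' A) := by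
  induction f using MvPolynomial.induction_on with
  | C a => simp
  | add f g hf hg => simpa [add_sub_add_comm] using add_mem hf hg
  | mul_X f i hf =>
    have hsplit : f * X i - aeval (Aᶜ.indicator X) (f * X i) =
        (f - aeval (Aᶜ.indicator X) f) * X i
          + aeval (Aᶜ.indicator X) f * (X i - Aᶜ.indicator X i) := by
      rw [map_mul, aeval_X]; ring
    rw [hsplit]
    refine add_mem (Ideal.mul_mem_right _ _ hf) (Ideal.mul_mem_left _ _ ?_)
    by_cases hi : i ∈ A
    · rw [Set.indicator_of_notMem (Set.notMem_compl_iff.mpr hi), sub_zero]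
      exact Ideal.subset_span ⟨i, hi, rfl⟩
    · rw [Set.indicator_of_mem hi, sub_self]
      exact zero_mem _

theorem ker_aeval_indicator_compl (A : Set σ) :
    RingHom.ker (aeval (Aᶜ.indicator (X : σ → MvPolynomial σ R))) =
      Ideal.span (X '' A : Set (MvPolynomial σ R)) := by
  refine le_antisymm (fun f hf => ?_) ?_
  · have hsub := sub_aeval_indicator_compl_mem_span_X_image A f
    rwa [RingHom.mem_ker.mp hf, sub_zero] at hsub
  · rw [Ideal.span_le]
    rintro _ ⟨i, hi, rfl⟩
    simp [hi]

theorem isPrime_span_X_image [IsDomain R] (A : Set σ) :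
    (Ideal.span (X '' A : Set (MvPolynomial σ R))).IsPrime :=
  ker_aeval_indicator_compl (R := R) A ▸ RingHom.ker_isPrime _

end CommRing

end MvPolynomial

namespace IsMinimalVertexCover

variable {V : Type} {G : SimpleGraph V} {A : Set V}

theorem exists_adj_notMem (hA : IsMinimalVertexCover G A) {a : V} (ha : a ∈ A) :
    ∃ j ∉ A, G.Adj a j := by
  by_contra! hall
  have hnbr : ∀ j, G.Adj a j → j ∈ A := fun j hj => by_contra fun h => hall j h hj
  refine hA.2 (A \ {a}) (Set.sdiff_singleton_ssubset.mpr ha) fun u v huv => ?_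
  rcases eq_or_ne u a with rfl | hu
  · exact Or.inr ⟨hnbr v huv, huv.ne'⟩
  rcases eq_or_ne v a with rfl | hv
  · exact Or.inl ⟨hnbr u huv.symm, huv.ne⟩
  exact (hA.1 huv).imp (fun h => ⟨h, hu⟩) (fun h => ⟨h, hv⟩)

theorem notMem_of_neighborSet_eq_singleton (hA : IsMinimalVertexCover G A) {x y : V}
    (hleaf : G.neighborSet x = {y}) (hx : x ∈ A) : y ∉ A := by
  obtain ⟨j, hj, hxj⟩ := hA.exists_adj_notMem hx
  have hj' : j ∈ G.neighborSet x := hxj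
  rw [hleaf, Set.mem_singleton_iff] at hj'
  exact hj' ▸ hj

end IsMinimalVertexCover

section EdgeIdeal

variable {K : Type} [Field K] {n : ℕ} {G : SimpleGraph (Fin n)}

theorem edgeIdeal_le_span_X_image {A : Set (Fin n)} (hA : IsVertexCover G A) :
    edgeIdeal K G ≤ Ideal.span (X '' A) := by
  rw [edgeIdeal, Ideal.span_le]
  rintro _ ⟨i, j, hij, rfl⟩
  rcases hA hij with h | h
  · exact Ideal.mul_mem_right _ _ (Ideal.subset_span ⟨i, h, rfl⟩)
  · exact Ideal.mul_mem_left _ _ (Ideal.subset_span ⟨j, h, rfl⟩)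

theorem isVertexCover_setOf_X_mem {p : Ideal (MvPolynomial (Fin n) K)} [hp : p.IsPrime]
    (h : edgeIdeal K G ≤ p) : IsVertexCover G {i | X i ∈ p} := fun i j hij =>
  hp.mem_or_mem (h (Ideal.subset_span ⟨i, j, hij, rfl⟩))

theorem isMinimalVertexCover_of_mem_minimalPrimes {p : Ideal (MvPolynomial (Fin n) K)}
    (hp : p ∈ (edgeIdeal K G).minimalPrimes) : IsMinimalVertexCover G {i | X i ∈ p} := by
  have := hp.1.1
  refine ⟨isVertexCover_setOf_X_mem hp.1.2, fun B hBA hB => ?_⟩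
  have hBp : Ideal.span (X '' B) ≤ p := Ideal.span_le.mpr (Set.image_subset_iff.mpr hBA.subset)
  have hpB : p ≤ Ideal.span (X '' B) :=
    hp.2 ⟨isPrime_span_X_image B, edgeIdeal_le_span_X_image hB⟩ hBp
  exact hBA.not_subset fun i hi => X_mem_span_X_image_iff.mp (hpB hi)

theorem exists_mul_mem_edgeIdeal_pow_of_mul_leafEdge_mem {x y : Fin n}
    (hleaf : G.neighborSet x = {y}) {p : Ideal (MvPolynomial (Fin n) K)}
    (hp : p ∈ (edgeIdeal K G).minimalPrimes) {t : ℕ} {u r : MvPolynomial (Fin n) K}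
    (hu : u ∉ p) (h : u * r * (X x * X y) ∈ edgeIdeal K G ^ (t + 1)) :
    ∃ v ∉ p, v * r ∈ edgeIdeal K G ^ t := by
  classical
  have := hp.1.1
  set A : Set (Fin n) := {i | X i ∈ p}
  have hA : IsMinimalVertexCover G A := isMinimalVertexCover_of_mem_minimalPrimes hp
  have hxy : Finsupp.weight (A.indicator 1) (Finsupp.single x 1 + Finsupp.single y 1) = 1 := by
    have hcov := hA.1 (show G.Adj x y from (hleaf ▸ rfl : y ∈ G.neighborSet x))
    by_cases hx : x ∈ A
    · simp [Finsupp.weight_single, hx, hA.notMem_of_neighborSet_eq_singleton hleaf hx]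
    · simp [Finsupp.weight_single, hx, hcov.resolve_left hx]
  have hur : u * r ∈ Ideal.span (X '' A) ^ t := by
    rw [span_X_image_pow]
    refine mem_weightGeIdeal_of_mul_monomial (e := Finsupp.single x 1 + Finsupp.single y 1) ?_
    rw [hxy, ← span_X_image_pow, ← mul_one (1 : K), ← monomial_mul, ← X, ← X]
    exact Ideal.pow_right_mono (edgeIdeal_le_span_X_image hA.1) _ h
  have : Nonempty (Fin n) := ⟨x⟩
  choose! j hjA hj using fun a (ha : a ∈ A) => hA.exists_adj_notMem ha
  refine ⟨(∏ a ∈ A.toFinset, X (j a)) ^ t * u, p.primeCompl.mul_mem (p.primeCompl.pow_mem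
    (p.primeCompl.prod_mem fun a ha => hjA a (Set.mem_toFinset.mp ha)) t) hu, ?_⟩
  rw [mul_assoc]
  refine Ideal.pow_mul_mem_pow_of_span_singleton_mul_le ?_ t hur
  simpa using Ideal.span_singleton_prod_mul_span_image_le (I := edgeIdeal K G) A.toFinset
    (fun a => X (j a)) X fun a ha =>
      Ideal.subset_span ⟨j a, a, (hj a (Set.mem_toFinset.mp ha)).symm, rfl⟩

end EdgeIdeal

/-- Let `x` be a leaf of `G` with unique neighbor `y`.  Then for every
`s ≥ 1`, `(I(G)^{(s)} : xy) = I(G)^{(s−1)}` (with `I(G)^{(0)} = S`). -/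
theorem symbolicPower_colon_leafEdge
    {K : Type} [Field K] {n : ℕ} (G : SimpleGraph (Fin n)) (x y : Fin n)
    (hleaf : G.neighborSet x = {y}) (s : ℕ) (hs : 1 ≤ s) :
    Submodule.colon (symbolicPower (edgeIdeal K G) s)
        (Ideal.span {(X x * X y : MvPolynomial (Fin n) K)}) =
      symbolicPower (edgeIdeal K G) (s - 1) := by
  obtain ⟨t, rfl⟩ : ∃ t, s = t + 1 := ⟨s - 1, by omega⟩
  have hxy : X x * X y ∈ edgeIdeal K G :=
    Ideal.subset_span ⟨x, y, (hleaf ▸ rfl : y ∈ G.neighborSet x), rfl⟩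
  ext r
  rw [Submodule.mem_colon_span_singleton, smul_eq_mul, mem_symbolicPower_iff,
    mem_symbolicPower_iff, Nat.add_sub_cancel]
  refine forall₂_congr fun p hp => ⟨fun ⟨u, hu, h⟩ => ?_, fun ⟨u, hu, h⟩ => ⟨u, hu, ?_⟩⟩
  · rw [← mul_assoc] at h
    exact exists_mul_mem_edgeIdeal_pow_of_mul_leafEdge_mem hleaf hp hu h
  · rw [← mul_assoc, pow_succ]
    exact Ideal.mul_mem_mul h hxy
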